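/- Equivalently, the sequence s_n of counts of separable permutations satisfies s_n = 2 s_{n−1} + ∑_{j=2}^{n−1} s_j s_{n−j} for n ≥ 2, with s_1 = 1 (i.e., s_{n+1} equals the n-th large Schröder number D_n). -/

import Mathlib

open Equiv Finset Filter Topology

/-- Direct sum of permutations: `(σ⊕τ)(i)=σ(i)` for `i<k`, `(σ⊕τ)(k+i)=k+τ(i)`. -/
def directSum {k l : ℕ} (σ : Equiv.Perm (Fin k)) (τ : Equiv.Perm (Fin l)) :
    Equiv.Perm (Fin (k + l)) :=
  finSumFinEquiv.symm.trans ((Equiv.sumCongr σ τ).trans finSumFinEquiv)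

/-- Skew sum of permutations: `(σ⊖τ)(i)=σ(i)+l` for `i<k`, `(σ⊖τ)(k+i)=τ(i)`. -/
def skewSum {k l : ℕ} (σ : Equiv.Perm (Fin k)) (τ : Equiv.Perm (Fin l)) :
    Equiv.Perm (Fin (k + l)) :=
  finSumFinEquiv.symm.trans ((Equiv.sumCongr σ τ).trans
    ((Equiv.sumComm (Fin k) (Fin l)).trans (finSumFinEquiv.trans (finCongr (Nat.add_comm l k)))))

/-- A permutation is separable if it is the singleton or a direct or skew sum of
two separable permutations. -/
inductive Separable : {n : ℕ} → Equiv.Perm (Fin n) → Prop where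
  | single : Separable (Equiv.refl (Fin 1))
  | dsum {k l : ℕ} {σ : Equiv.Perm (Fin k)} {τ : Equiv.Perm (Fin l)} :
      Separable σ → Separable τ → Separable (directSum σ τ)
  | ssum {k l : ℕ} {σ : Equiv.Perm (Fin k)} {τ : Equiv.Perm (Fin l)} :
      Separable σ → Separable τ → Separable (skewSum σ τ)

/-- `numSep n` = number of separable permutations of `[n]` (denoted `s_n`). -/
noncomputable def numSep (n : ℕ) : ℕ := Nat.card {σ : Equiv.Perm (Fin n) // Separable σ}

/-!
A separable permutation of size `n ≥ 2` is a direct sum or a skew sum of smaller ones, and never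
both; complementation `i ↦ n - 1 - π i` exchanges the two kinds, so `s_n = 2 p_n` where `p_n`
counts the plus-decomposable (direct sum) ones. Cutting such a permutation at its least split
point writes it uniquely as `σ ⊕ τ` with `σ` plus-indecomposable, and both parts are again
separable. Hence `p_n = ∑_{j=1}^{n-1} a_j s_{n-j}`, where `a_j = s_j - p_j` counts the
plus-indecomposable separable permutations: `a_1 = 1` and `a_j = s_j / 2` for `j ≥ 2`. This is the
recurrence, and it is the Schröder recurrence for `n ↦ s_{n+1}`, which determines that sequence.
-/

variable {k l m n : ℕ}

namespace Equiv.Perm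

/-- The values of `π` as a function on `ℕ`, extended by the identity. Permutations of different
sizes (in particular a permutation and its casts) are compared through this function. -/
def natFun (π : Perm (Fin n)) (i : ℕ) : ℕ := if h : i < n then π ⟨i, h⟩ else i

theorem natFun_of_lt (π : Perm (Fin n)) {i : ℕ} (h : i < n) : π.natFun i = π ⟨i, h⟩ := dif_pos h

theorem natFun_of_le (π : Perm (Fin n)) {i : ℕ} (h : n ≤ i) : π.natFun i = i := dif_neg (by omega)

theorem natFun_lt_iff (π : Perm (Fin n)) {i : ℕ} : π.natFun i < n ↔ i < n := by
  by_cases h : i < n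
  · simp [natFun_of_lt π h, h]
  · simp [natFun_of_le π (not_lt.mp h), h]

theorem natFun_injective (π : Perm (Fin n)) : Function.Injective π.natFun := by
  intro i j hij
  have hlt : i < n ↔ j < n := by rw [← π.natFun_lt_iff, hij, π.natFun_lt_iff]
  by_cases hi : i < n
  · rw [natFun_of_lt π hi, natFun_of_lt π (hlt.mp hi)] at hij
    simpa using π.injective (Fin.ext hij)
  · rwa [natFun_of_le π (not_lt.mp hi), natFun_of_le π (by omega)] at hij

theorem natFun_inj {π π' : Perm (Fin n)} : π.natFun = π'.natFun ↔ π = π' := by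
  refine ⟨fun h => Equiv.ext fun i => Fin.ext ?_, fun h => h ▸ rfl⟩
  simpa [natFun_of_lt _ i.2] using congrFun h i

theorem natFun_permCongr_finCongr (h : m = n) (π : Perm (Fin m)) :
    ((finCongr h).permCongr π).natFun = π.natFun := by
  subst h; rfl

theorem exists_natFun_eq (f : ℕ → ℕ) (hmaps : ∀ i < n, f i < n)
    (hinj : ∀ i < n, ∀ j < n, f i = f j → i = j) :
    ∃ π : Perm (Fin n), ∀ i < n, π.natFun i = f i := by
  let g : Fin n → Fin n := fun i => ⟨f i, hmaps i i.2⟩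
  have hg : Function.Injective g := fun i j h => Fin.ext (hinj i i.2 j j.2 (congrArg Fin.val h))
  exact ⟨Equiv.ofBijective g (Finite.injective_iff_bijective.mp hg), fun i hi => by
    simp [natFun_of_lt _ hi, g]⟩

def complement (π : Perm (Fin n)) : Perm (Fin n) := π.trans Fin.revPerm

theorem natFun_complement_of_lt (π : Perm (Fin n)) {i : ℕ} (hi : i < n) :
    π.complement.natFun i = n - 1 - π.natFun i := by
  rw [natFun_of_lt _ hi, natFun_of_lt _ hi]
  simp [complement, Fin.rev]
  omega

@[simp] theorem complement_complement (π : Perm (Fin n)) : π.complement.complement = π := by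
  ext i
  simp [complement]

theorem mapsTo_Ici_of_mapsTo_Iio (π : Perm (Fin n))
    (h : Set.MapsTo π.natFun (Set.Iio k) (Set.Iio k)) :
    Set.MapsTo π.natFun (Set.Ici k) (Set.Ici k) := by
  intro i (hi : k ≤ i)
  by_contra hlt
  obtain ⟨j, hj, hji⟩ := ((Set.finite_Iio k).injOn_iff_bijOn_of_mapsTo h).mp
    (π.natFun_injective.injOn) |>.surjOn (Set.mem_Iio.mpr (not_le.mp hlt))
  obtain rfl := π.natFun_injective hji
  exact not_lt.mpr hi hj

end Equiv.Perm

open Equiv.Perm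

theorem natFun_directSum (σ : Perm (Fin k)) (τ : Perm (Fin l)) (i : ℕ) :
    (directSum σ τ).natFun i = if i < k then σ.natFun i else k + τ.natFun (i - k) := by
  rcases lt_or_ge i k with hk | hk
  · rw [if_pos hk, natFun_of_lt _ (by omega), natFun_of_lt _ hk, directSum, Equiv.trans_apply,
      Equiv.trans_apply, show (⟨i, _⟩ : Fin (k + l)) = Fin.castAdd l ⟨i, hk⟩ from rfl,
      finSumFinEquiv_symm_apply_castAdd]
    simp
  rw [if_neg (by omega)]
  rcases lt_or_ge i (k + l) with hl | hl
  · rw [natFun_of_lt _ hl, natFun_of_lt _ (by omega)]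
    have : (⟨i, hl⟩ : Fin (k + l)) = Fin.natAdd k ⟨i - k, by omega⟩ := Fin.ext (by simp; omega)
    rw [directSum, Equiv.trans_apply, Equiv.trans_apply, this, finSumFinEquiv_symm_apply_natAdd]
    simp
  · rw [natFun_of_le _ hl, natFun_of_le _ (by omega)]
    omega

theorem natFun_skewSum_of_lt (σ : Perm (Fin k)) (τ : Perm (Fin l)) {i : ℕ} (hi : i < k + l) :
    (skewSum σ τ).natFun i = if i < k then l + σ.natFun i else τ.natFun (i - k) := by
  rw [natFun_of_lt _ hi]
  rcases lt_or_ge i k with hk | hk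
  · rw [if_pos hk, natFun_of_lt _ hk, skewSum, Equiv.trans_apply, Equiv.trans_apply,
      show (⟨i, _⟩ : Fin (k + l)) = Fin.castAdd l ⟨i, hk⟩ from rfl,
      finSumFinEquiv_symm_apply_castAdd]
    simp
    omega
  · rw [if_neg (by omega), natFun_of_lt _ (by omega)]
    have : (⟨i, hi⟩ : Fin (k + l)) = Fin.natAdd k ⟨i - k, by omega⟩ := Fin.ext (by simp; omega)
    rw [skewSum, Equiv.trans_apply, Equiv.trans_apply, this, finSumFinEquiv_symm_apply_natAdd]
    simp

theorem complement_directSum (σ : Perm (Fin k)) (τ : Perm (Fin l)) :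
    (directSum σ τ).complement = skewSum σ.complement τ.complement := by
  rw [← natFun_inj]
  funext i
  rcases lt_or_ge i (k + l) with hi | hi
  · rw [natFun_complement_of_lt _ hi, natFun_skewSum_of_lt _ _ hi, natFun_directSum]
    have hσ := σ.natFun_lt_iff (i := i)
    have hτ := τ.natFun_lt_iff (i := i - k)
    split_ifs with hik
    · rw [natFun_complement_of_lt _ hik]; omega
    · rw [natFun_complement_of_lt _ (by omega)]; omega
  · rw [natFun_of_le _ hi, natFun_of_le _ hi]

theorem complement_skewSum (σ : Perm (Fin k)) (τ : Perm (Fin l)) :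
    (skewSum σ τ).complement = directSum σ.complement τ.complement := by
  simpa using (congrArg complement (complement_directSum σ.complement τ.complement)).symm

theorem mapsTo_directSum_iff (σ : Perm (Fin k)) (τ : Perm (Fin l)) {j : ℕ} (hj : j ≤ k) :
    Set.MapsTo (directSum σ τ).natFun (Set.Iio j) (Set.Iio j) ↔
      Set.MapsTo σ.natFun (Set.Iio j) (Set.Iio j) := by
  refine forall_congr' fun i => imp_congr_right fun (hi : i < j) => ?_
  rw [natFun_directSum, if_pos (by omega)]

theorem mapsTo_of_mapsTo_directSum (σ : Perm (Fin k)) (τ : Perm (Fin l)) {j : ℕ}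
    (h : Set.MapsTo (directSum σ τ).natFun (Set.Iio (k + j)) (Set.Iio (k + j))) :
    Set.MapsTo τ.natFun (Set.Iio j) (Set.Iio j) := by
  intro i (hi : i < j)
  have := h (show k + i < k + j by omega)
  simp only [Set.mem_Iio, natFun_directSum, if_neg (show ¬ k + i < k by omega),
    Nat.add_sub_cancel_left] at this ⊢
  omega

theorem exists_natFun_eq_directSum (π : Perm (Fin n)) (hk : k ≤ n)
    (h : Set.MapsTo π.natFun (Set.Iio k) (Set.Iio k)) :
    ∃ (σ : Perm (Fin k)) (τ : Perm (Fin (n - k))), π.natFun = (directSum σ τ).natFun := by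
  have hge : ∀ i, k ≤ i → k ≤ π.natFun i := fun i hi => π.mapsTo_Ici_of_mapsTo_Iio h hi
  obtain ⟨σ, hσ⟩ := exists_natFun_eq (n := k) π.natFun (fun i hi => h hi)
    (fun i _ j _ hij => π.natFun_injective hij)
  obtain ⟨τ, hτ⟩ := exists_natFun_eq (n := n - k) (fun i => π.natFun (k + i) - k)
    (fun i hi => by have := π.natFun_lt_iff.mpr (show k + i < n by omega); omega)
    (fun i _ j _ hij => by
      have := hge (k + i) (by omega)
      have := hge (k + j) (by omega)
      have := π.natFun_injective (show π.natFun (k + i) = π.natFun (k + j) by omega)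
      omega)
  refine ⟨σ, τ, funext fun i => ?_⟩
  rw [natFun_directSum]
  split_ifs with hik
  · rw [hσ i hik]
  rcases lt_or_ge i n with hin | hin
  · rw [hτ (i - k) (by omega), Nat.add_sub_cancel' (not_lt.mp hik)]
    have := hge i (not_lt.mp hik)
    omega
  · rw [natFun_of_le _ hin, natFun_of_le _ (by omega)]
    omega

theorem natFun_directSum_congr {k' l' : ℕ} {σ : Perm (Fin k)} {τ : Perm (Fin l)}
    {σ' : Perm (Fin k')} {τ' : Perm (Fin l')} (hk : k = k')
    (hσ : σ.natFun = σ'.natFun) (hτ : τ.natFun = τ'.natFun) :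
    (directSum σ τ).natFun = (directSum σ' τ').natFun := by
  subst hk
  funext i
  simp only [natFun_directSum, hσ, hτ]

theorem natFun_directSum_assoc {j : ℕ} (ρ : Perm (Fin j)) (σ : Perm (Fin k))
    (τ : Perm (Fin l)) :
    (directSum (directSum ρ σ) τ).natFun = (directSum ρ (directSum σ τ)).natFun := by
  funext i
  simp only [natFun_directSum, Nat.sub_sub]
  split_ifs <;> omega

theorem natFun_eq_of_natFun_directSum_eq {k' l' : ℕ} {σ : Perm (Fin k)} {τ : Perm (Fin l)}
    {σ' : Perm (Fin k')} {τ' : Perm (Fin l')} (hk : k = k')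
    (h : (directSum σ τ).natFun = (directSum σ' τ').natFun) :
    σ.natFun = σ'.natFun ∧ τ.natFun = τ'.natFun := by
  subst hk
  refine ⟨funext fun i => ?_, funext fun i => ?_⟩
  · rcases lt_or_ge i k with hi | hi
    · simpa [natFun_directSum, hi] using congrFun h i
    · rw [natFun_of_le _ hi, natFun_of_le _ hi]
  · simpa [natFun_directSum] using congrFun h (k + i)

theorem mapsTo_directSum_Iio (σ : Perm (Fin k)) (τ : Perm (Fin l)) :
    Set.MapsTo (directSum σ τ).natFun (Set.Iio k) (Set.Iio k) :=
  (mapsTo_directSum_iff σ τ le_rfl).mpr fun _ hi => σ.natFun_lt_iff.mpr hi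

def PlusDecomposable (π : Perm (Fin n)) : Prop :=
  ∃ k, 0 < k ∧ k < n ∧ Set.MapsTo π.natFun (Set.Iio k) (Set.Iio k)

theorem plusDecomposable_directSum (σ : Perm (Fin k)) (τ : Perm (Fin l)) (hk : 0 < k)
    (hl : 0 < l) : PlusDecomposable (directSum σ τ) :=
  ⟨k, hk, by omega, mapsTo_directSum_Iio σ τ⟩

theorem PlusDecomposable.not_complement {π : Perm (Fin n)} (h : PlusDecomposable π) :
    ¬ PlusDecomposable π.complement := by
  rintro ⟨b, hb, hbn, hB⟩
  obtain ⟨a, ha, han, hA⟩ := h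
  -- `π 0 < a` and `π 0 ≥ n - b`, while `a ≤ π (max a b) < n - b`.
  have h₀ := hA (show 0 ∈ Set.Iio a from ha)
  have h₀' := hB (show 0 ∈ Set.Iio b from hb)
  have h₁ := π.mapsTo_Ici_of_mapsTo_Iio hA (show max a b ∈ Set.Ici a from le_max_left a b)
  have h₁' := π.complement.mapsTo_Ici_of_mapsTo_Iio hB
    (show max a b ∈ Set.Ici b from le_max_right a b)
  simp only [Set.mem_Iio, Set.mem_Ici] at h₀ h₀' h₁ h₁'
  rw [natFun_complement_of_lt _ (by omega)] at h₀' h₁'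
  have := π.natFun_lt_iff.mpr (show max a b < n by omega)
  omega

theorem size_le_of_natFun_directSum_eq {k' l' : ℕ} {σ : Perm (Fin k)} {τ : Perm (Fin l)}
    {σ' : Perm (Fin k')} {τ' : Perm (Fin l')} (hk : 0 < k) (hσ' : ¬ PlusDecomposable σ')
    (h : (directSum σ τ).natFun = (directSum σ' τ').natFun) : k' ≤ k := by
  by_contra! hlt
  refine hσ' ⟨k, hk, hlt, ?_⟩
  rw [← mapsTo_directSum_iff σ' τ' hlt.le, ← h]
  exact mapsTo_directSum_Iio σ τ

namespace Separable

theorem size_pos {π : Perm (Fin n)} (h : Separable π) : 0 < n := by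
  induction h <;> omega

theorem of_natFun_eq {π : Perm (Fin n)} {π' : Perm (Fin m)} (h : Separable π) (hnm : n = m)
    (hf : π.natFun = π'.natFun) : Separable π' := by
  subst hnm
  rwa [← natFun_inj.mp hf]

protected theorem complement {π : Perm (Fin n)} (h : Separable π) : Separable π.complement := by
  induction h with
  | single => rw [Subsingleton.elim (complement _) (Equiv.refl (Fin 1))]; exact single
  | dsum _ _ hσ hτ => rw [complement_directSum]; exact ssum hσ hτ
  | ssum _ _ hσ hτ => rw [complement_skewSum]; exact dsum hσ hτ

theorem plusDecomposable_or_complement {π : Perm (Fin n)} (h : Separable π) (hn : 2 ≤ n) :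
    PlusDecomposable π ∨ PlusDecomposable π.complement := by
  cases h with
  | single => omega
  | dsum hσ hτ => exact Or.inl (plusDecomposable_directSum _ _ hσ.size_pos hτ.size_pos)
  | ssum hσ hτ =>
    right
    rw [complement_skewSum]
    exact plusDecomposable_directSum _ _ hσ.size_pos hτ.size_pos

theorem of_natFun_eq_directSum {π : Perm (Fin n)} (hπ : Separable π) {σ : Perm (Fin k)}
    {τ : Perm (Fin l)} (hn : k + l = n) (hk : 0 < k) (hl : 0 < l)
    (h : π.natFun = (directSum σ τ).natFun) : Separable σ ∧ Separable τ := by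
  induction hπ generalizing k l with
  | single => omega
  | @ssum k' l' σ' τ' hσ' hτ' _ _ =>
    refine absurd ?_
      (PlusDecomposable.not_complement (π := skewSum σ' τ') ⟨k, hk, by omega, ?_⟩)
    · rw [complement_skewSum]
      exact plusDecomposable_directSum _ _ hσ'.size_pos hτ'.size_pos
    · rw [h]
      exact mapsTo_directSum_Iio σ τ
  | @dsum k' l' σ' τ' hσ' hτ' ihσ ihτ =>
    -- If the split point `k` falls inside `σ'`, write `σ' = ρ₁ ⊕ ρ₂`, so that
    -- `σ ⊕ τ = ρ₁ ⊕ (ρ₂ ⊕ τ')`; symmetrically if it falls inside `τ'`.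
    rcases lt_trichotomy k k' with hkk | rfl | hkk
    · have hsplit : Set.MapsTo σ'.natFun (Set.Iio k) (Set.Iio k) := by
        rw [← mapsTo_directSum_iff σ' τ' hkk.le, h]
        exact mapsTo_directSum_Iio σ τ
      obtain ⟨ρ₁, ρ₂, hρ⟩ := exists_natFun_eq_directSum σ' hkk.le hsplit
      obtain ⟨h₁, h₂⟩ := ihσ (by omega) hk (by omega) hρ
      obtain ⟨hσρ, hτρ⟩ := natFun_eq_of_natFun_directSum_eq rfl <| h.symm.trans <|
        (natFun_directSum_congr (by omega) hρ rfl).trans (natFun_directSum_assoc ρ₁ ρ₂ τ')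
      exact ⟨h₁.of_natFun_eq rfl hσρ.symm, (dsum h₂ hτ').of_natFun_eq (by omega) hτρ.symm⟩
    · obtain ⟨hσσ', hττ'⟩ := natFun_eq_of_natFun_directSum_eq rfl h
      exact ⟨hσ'.of_natFun_eq rfl hσσ', hτ'.of_natFun_eq (by omega) hττ'⟩
    · have hsplit : Set.MapsTo τ'.natFun (Set.Iio (k - k')) (Set.Iio (k - k')) := by
        apply mapsTo_of_mapsTo_directSum σ'
        rw [Nat.add_sub_cancel' hkk.le, h]
        exact mapsTo_directSum_Iio σ τ
      obtain ⟨ρ₁, ρ₂, hρ⟩ := exists_natFun_eq_directSum τ' (k := k - k') (by omega) hsplit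
      obtain ⟨h₁, h₂⟩ := ihτ (by omega) (by omega) (by omega) hρ
      obtain ⟨hσρ, hτρ⟩ := natFun_eq_of_natFun_directSum_eq (by omega) <| h.symm.trans <|
        (natFun_directSum_congr rfl rfl hρ).trans (natFun_directSum_assoc σ' ρ₁ ρ₂).symm
      exact ⟨(dsum hσ' h₁).of_natFun_eq (by omega) hσρ.symm,
        h₂.of_natFun_eq (by omega) hτρ.symm⟩

end Separable

theorem Nat.card_subtype_and_add_card_subtype_and_not {α : Type*} [Finite α] (p q : α → Prop) :
    Nat.card {x // p x ∧ q x} + Nat.card {x // p x ∧ ¬ q x} = Nat.card {x // p x} := by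
  classical
  rw [← Nat.card_sum]
  exact Nat.card_congr <| (Equiv.sumCongr (Equiv.subtypeSubtypeEquivSubtypeInter p q).symm
    (Equiv.subtypeSubtypeEquivSubtypeInter p (¬ q ·)).symm).trans
    (Equiv.sumCompl fun x : {x // p x} => q x)

noncomputable def numSepPlusDecomposable (n : ℕ) : ℕ :=
  Nat.card {π : Perm (Fin n) // Separable π ∧ PlusDecomposable π}

noncomputable def numSepPlusIndecomposable (n : ℕ) : ℕ :=
  Nat.card {π : Perm (Fin n) // Separable π ∧ ¬ PlusDecomposable π}

theorem numSepPlusDecomposable_add_numSepPlusIndecomposable (n : ℕ) :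
    numSepPlusDecomposable n + numSepPlusIndecomposable n = numSep n :=
  Nat.card_subtype_and_add_card_subtype_and_not _ _

theorem numSepPlusIndecomposable_eq_numSepPlusDecomposable (hn : 2 ≤ n) :
    numSepPlusIndecomposable n = numSepPlusDecomposable n := by
  -- not plus-decomposable means minus-decomposable, and complementation swaps the two
  refine Nat.card_congr <| (Equiv.subtypeEquivRight (q := fun π =>
    Separable π ∧ PlusDecomposable π.complement) fun π => ?_).trans
    ((Function.Involutive.toPerm _ complement_complement).subtypeEquiv fun π => ?_)
  · exact and_congr_right fun h =>
      ⟨(h.plusDecomposable_or_complement hn).resolve_left, fun hc hd => hd.not_complement hc⟩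
  · refine and_congr_left' ⟨Separable.complement, fun h => ?_⟩
    simpa using (show Separable π.complement from h).complement

theorem numSep_one : numSep 1 = 1 := by
  have hsep (σ : Perm (Fin 1)) : Separable σ := Subsingleton.elim (Equiv.refl _) σ ▸ .single
  rw [numSep, Nat.card_congr (Equiv.subtypeUnivEquiv hsep), Nat.card_perm]
  simp

theorem numSepPlusIndecomposable_one : numSepPlusIndecomposable 1 = 1 := by
  have : IsEmpty {π : Perm (Fin 1) // Separable π ∧ PlusDecomposable π} :=
    ⟨fun ⟨_, _, k, hk, hk1, _⟩ => by omega⟩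
  have h := numSepPlusDecomposable_add_numSepPlusIndecomposable 1
  rwa [numSepPlusDecomposable, Nat.card_of_isEmpty, numSep_one, zero_add] at h

def joinFirstBlock (n : ℕ)
    (x : Σ j : Finset.Icc 1 (n - 1), {σ : Perm (Fin j) // Separable σ ∧ ¬ PlusDecomposable σ} ×
      {τ : Perm (Fin (n - j)) // Separable τ}) :
    {π : Perm (Fin n) // Separable π ∧ PlusDecomposable π} :=
  have hj := Finset.mem_Icc.mp x.1.2
  have hjn : x.1 + (n - x.1) = n := by omega
  ⟨(finCongr hjn).permCongr (directSum x.2.1.1 x.2.2.1),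
    (Separable.dsum x.2.1.2.1 x.2.2.2).of_natFun_eq hjn (natFun_permCongr_finCongr _ _).symm,
    ⟨x.1, hj.1, by omega, by rw [natFun_permCongr_finCongr]; exact mapsTo_directSum_Iio _ _⟩⟩

theorem joinFirstBlock_injective (n : ℕ) : Function.Injective (joinFirstBlock n) := by
  rintro ⟨⟨j, hj⟩, ⟨σ, hσ⟩, ⟨τ, hτ⟩⟩ ⟨⟨j', hj'⟩, ⟨σ', hσ'⟩, ⟨τ', hτ'⟩⟩ h
  have hf : (directSum σ τ).natFun = (directSum σ' τ').natFun := by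
    simpa only [joinFirstBlock, natFun_permCongr_finCongr] using congrArg (·.1.natFun) h
  obtain rfl : j = j' := le_antisymm
    (size_le_of_natFun_directSum_eq (Finset.mem_Icc.mp hj').1 hσ.2 hf.symm)
    (size_le_of_natFun_directSum_eq (Finset.mem_Icc.mp hj).1 hσ'.2 hf)
  obtain ⟨hσσ', hττ'⟩ := natFun_eq_of_natFun_directSum_eq rfl hf
  obtain rfl := natFun_inj.mp hσσ'
  obtain rfl := natFun_inj.mp hττ'
  rfl

theorem joinFirstBlock_surjective (n : ℕ) : Function.Surjective (joinFirstBlock n) := by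
  classical
  rintro ⟨π, hπ, hdec⟩
  obtain ⟨hj0, hjn, hsplit⟩ := Nat.find_spec hdec
  obtain ⟨σ, τ, h⟩ := exists_natFun_eq_directSum π hjn.le hsplit
  obtain ⟨hσ, hτ⟩ := hπ.of_natFun_eq_directSum (by omega) hj0 (by omega) h
  have hσ_indec : ¬ PlusDecomposable σ := fun ⟨i, hi0, hij, hi⟩ =>
    Nat.find_min hdec hij ⟨hi0, by omega, by rwa [h, mapsTo_directSum_iff σ τ hij.le]⟩
  refine ⟨⟨⟨Nat.find hdec, Finset.mem_Icc.mpr ⟨hj0, by omega⟩⟩, ⟨σ, hσ, hσ_indec⟩, ⟨τ, hτ⟩⟩,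
    Subtype.ext ?_⟩
  exact natFun_inj.mp <|
    (natFun_permCongr_finCongr (by omega : _ + (n - _) = n) (directSum σ τ)).trans h.symm

theorem numSepPlusDecomposable_eq_sum (n : ℕ) :
    numSepPlusDecomposable n =
      ∑ j ∈ Finset.Icc 1 (n - 1), numSepPlusIndecomposable j * numSep (n - j) := by
  rw [numSepPlusDecomposable, ← Nat.card_eq_of_bijective _
    ⟨joinFirstBlock_injective n, joinFirstBlock_surjective n⟩, Nat.card_sigma,
    ← Finset.sum_coe_sort (Finset.Icc 1 (n - 1))
      (fun j => numSepPlusIndecomposable j * numSep (n - j))]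
  simp only [Nat.card_prod]
  rfl

theorem numSep_eq_two_mul_numSepPlusDecomposable (hn : 2 ≤ n) :
    numSep n = 2 * numSepPlusDecomposable n := by
  rw [← numSepPlusDecomposable_add_numSepPlusIndecomposable,
    numSepPlusIndecomposable_eq_numSepPlusDecomposable hn, two_mul]

theorem two_mul_numSepPlusIndecomposable (hn : 2 ≤ n) :
    2 * numSepPlusIndecomposable n = numSep n := by
  rw [numSepPlusIndecomposable_eq_numSepPlusDecomposable hn,
    numSep_eq_two_mul_numSepPlusDecomposable hn]

theorem numSep_recurrence (hn : 2 ≤ n) :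
    numSep n = 2 * numSep (n - 1) + ∑ j ∈ Finset.Icc 2 (n - 1), numSep j * numSep (n - j) := by
  have hIcc : Finset.Icc 1 (n - 1) = insert 1 (Finset.Icc 2 (n - 1)) :=
    (Finset.insert_Icc_add_one_left_eq_Icc (by omega)).symm
  have hrest : ∑ j ∈ Finset.Icc 2 (n - 1), 2 * (numSepPlusIndecomposable j * numSep (n - j)) =
      ∑ j ∈ Finset.Icc 2 (n - 1), numSep j * numSep (n - j) :=
    Finset.sum_congr rfl fun j hj => by
      rw [← mul_assoc, two_mul_numSepPlusIndecomposable (Finset.mem_Icc.mp hj).1]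
  rw [numSep_eq_two_mul_numSepPlusDecomposable hn, numSepPlusDecomposable_eq_sum, hIcc,
    Finset.sum_insert (by simp), numSepPlusIndecomposable_one, one_mul, mul_add, Finset.mul_sum,
    hrest]

theorem numSep_succ_schroeder {n : ℕ} (hn : 1 ≤ n) :
    numSep (n + 1) =
      numSep (n - 1 + 1) + ∑ k ∈ Finset.range n, numSep (k + 1) * numSep (n - 1 - k + 1) := by
  obtain ⟨m, rfl⟩ : ∃ m, n = m + 1 := ⟨n - 1, by omega⟩
  have hsum : ∑ j ∈ Finset.Icc 2 (m + 1), numSep j * numSep (m + 1 + 1 - j) =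
      ∑ k ∈ Finset.range m, numSep (k + 1 + 1) * numSep (m - (k + 1) + 1) := by
    rw [← Finset.Ico_add_one_right_eq_Icc, Finset.sum_Ico_eq_sum_range,
      show m + 1 + 1 - 2 = m by omega]
    refine Finset.sum_congr rfl fun k hk => ?_
    rw [Finset.mem_range] at hk
    congr 2 <;> omega
  rw [numSep_recurrence (by omega), Finset.sum_range_succ']
  simp only [Nat.add_sub_cancel, Nat.sub_zero, zero_add]
  rw [hsum, numSep_one]
  ring

theorem eq_of_schroeder_recurrence {D E : ℕ → ℕ} (h0 : D 0 = E 0)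
    (hD : ∀ n, 1 ≤ n → D n = D (n - 1) + ∑ k ∈ Finset.range n, D k * D (n - 1 - k))
    (hE : ∀ n, 1 ≤ n → E n = E (n - 1) + ∑ k ∈ Finset.range n, E k * E (n - 1 - k)) :
    D = E := by
  funext n
  induction n using Nat.strong_induction_on with
  | _ n ih =>
    rcases Nat.eq_zero_or_pos n with rfl | hn
    · exact h0
    rw [hD n hn, hE n hn, ih (n - 1) (by omega)]
    congr 1
    refine Finset.sum_congr rfl fun k hk => ?_
    have hk := Finset.mem_range.mp hk
    rw [ih k hk, ih (n - 1 - k) (by omega)]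

/-- `s_n = 2 s_{n-1} + ∑_{j=2}^{n-1} s_j s_{n-j}` for `n ≥ 2`, with `s_1 = 1`; equivalently
`s_{n+1}` is the `n`-th large Schröder number `D_n`, where `D_0 = 1` and
`D_n = D_{n-1} + ∑_{k=0}^{n-1} D_k D_{n-1-k}` for `n ≥ 1`. -/
theorem numSep_schroeder_recurrence :
    numSep 1 = 1 ∧
    (∀ n : ℕ, 2 ≤ n →
      numSep n = 2 * numSep (n - 1) + ∑ j ∈ Finset.Icc 2 (n - 1), numSep j * numSep (n - j)) ∧
    ∀ D : ℕ → ℕ, D 0 = 1 →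
      (∀ n : ℕ, 1 ≤ n → D n = D (n - 1) + ∑ k ∈ Finset.range n, D k * D (n - 1 - k)) →
      ∀ n : ℕ, numSep (n + 1) = D n :=
  ⟨numSep_one, fun _ => numSep_recurrence, fun _ h0 hD n =>
    congrFun (eq_of_schroeder_recurrence (numSep_one.trans h0.symm)
      (fun _ => numSep_succ_schroeder) hD) n⟩
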